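/- arXiv:1508.04228 — 7 statements merged into one kernel-verified Lean document; each statement's English description precedes it below -/
import Mathlib

section
/- For s > 0, the function I(q) = −(q+s)·log(q+s) + q(1+s)·log(1+s) + (1−q)·s·log s on [0,1] attains its maximum over [0,1] at the unique point q* = (1+s)^{1+s}/(e·s^s) − s, and moreover q* ∈ (0,1). -/
/-!
Writing `c = (1 + s) log (1 + s) - s log s`, the rate is `I q = g (q + s) + const` with
`g t = -t log t + c t`, and `log x < x - 1` (for `x ≠ 1`) gives `g t < exp (c - 1) = g (exp (c - 1))`
for every other `t ≥ 0`. So the unique maximiser is `q* = exp (c - 1) - s`, which is the stated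
closed form. That `s < exp (c - 1) < 1 + s` is the classical fact that the identric mean of
`s` and `1 + s` lies strictly between them.
-/

open Real Set

theorem neg_mul_log_add_mul_lt_exp {c t : ℝ} (ht : 0 ≤ t) (hne : t ≠ exp (c - 1)) :
    -t * log t + c * t < exp (c - 1) := by
  rcases ht.eq_or_lt with rfl | ht
  · simpa using exp_pos (c - 1)
  have hlog : log (exp (c - 1) / t) < exp (c - 1) / t - 1 :=
    log_lt_sub_one_of_pos (by positivity) (by rwa [ne_eq, div_eq_one_iff_eq ht.ne', eq_comm])
  rw [log_div (exp_pos _).ne' ht.ne', log_exp, div_sub_one ht.ne', lt_div_iff₀ ht] at hlog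
  linarith

theorem neg_mul_log_add_mul_exp (c : ℝ) :
    -exp (c - 1) * log (exp (c - 1)) + c * exp (c - 1) = exp (c - 1) := by
  rw [log_exp]
  ring

theorem mul_log_div_lt_sub {a b : ℝ} (hb : 0 < b) (hab : b < a) : b * log (a / b) < a - b := by
  have h := log_lt_sub_one_of_pos (div_pos (hb.trans hab) hb) ((one_lt_div hb).2 hab).ne'
  rw [div_sub_one hb.ne', lt_div_iff₀ hb] at h
  linarith

theorem sub_lt_mul_log_div {a b : ℝ} (hb : 0 < b) (hab : b < a) : a - b < a * log (a / b) := by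
  have ha := hb.trans hab
  have h := log_lt_sub_one_of_pos (div_pos hb ha) ((div_lt_one ha).2 hab).ne
  rw [div_sub_one ha.ne', lt_div_iff₀ ha, ← inv_div, log_inv] at h
  linarith

theorem lt_exp_div_sub_sub_one {a b : ℝ} (hb : 0 < b) (hab : b < a) :
    b < exp ((a * log a - b * log b) / (a - b) - 1) := by
  have h := sub_lt_mul_log_div hb hab
  rw [log_div (hb.trans hab).ne' hb.ne'] at h
  rw [← log_lt_iff_lt_exp hb, lt_sub_iff_add_lt, lt_div_iff₀ (sub_pos.2 hab)]
  linear_combination h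

theorem exp_div_sub_sub_one_lt {a b : ℝ} (hb : 0 < b) (hab : b < a) :
    exp ((a * log a - b * log b) / (a - b) - 1) < a := by
  have h := mul_log_div_lt_sub hb hab
  rw [log_div (hb.trans hab).ne' hb.ne'] at h
  rw [← lt_log_iff_exp_lt (hb.trans hab), sub_lt_iff_lt_add, div_lt_iff₀ (sub_pos.2 hab)]
  linear_combination h

theorem rpow_self_div_exp_mul_rpow_self {a b : ℝ} (ha : 0 < a) (hb : 0 < b) :
    a ^ a / (exp 1 * b ^ b) = exp (a * log a - b * log b - 1) := by
  rw [rpow_def_of_pos ha, rpow_def_of_pos hb, ← exp_add, ← exp_sub]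
  ring_nf

theorem poisson_mi_max (s qstar : ℝ) (hs : 0 < s)
    (hq : qstar = (1 + s) ^ (1 + s) / (Real.exp 1 * s ^ s) - s) :
    qstar ∈ Ioo (0:ℝ) 1 ∧
    (∀ q ∈ Icc (0:ℝ) 1,
      -(q + s) * Real.log (q + s) + q * (1 + s) * Real.log (1 + s) + (1 - q) * s * Real.log s ≤
      -(qstar + s) * Real.log (qstar + s) + qstar * (1 + s) * Real.log (1 + s)
        + (1 - qstar) * s * Real.log s) ∧
    (∀ q ∈ Icc (0:ℝ) 1,
      -(q + s) * Real.log (q + s) + q * (1 + s) * Real.log (1 + s) + (1 - q) * s * Real.log s =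
      -(qstar + s) * Real.log (qstar + s) + qstar * (1 + s) * Real.log (1 + s)
        + (1 - qstar) * s * Real.log s → q = qstar) := by
  have hlt : s < 1 + s := by linarith
  have hlo := lt_exp_div_sub_sub_one hs hlt
  have hhi := exp_div_sub_sub_one_lt hs hlt
  rw [add_sub_cancel_right, div_one] at hlo hhi
  set c := (1 + s) * log (1 + s) - s * log s
  have hstar : qstar + s = exp (c - 1) := by
    rw [hq, sub_add_cancel, rpow_self_div_exp_mul_rpow_self (by linarith) hs]
  rw [← hstar] at hlo hhi
  have hI : ∀ q, -(q + s) * log (q + s) + q * (1 + s) * log (1 + s) + (1 - q) * s * log s =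
      -(q + s) * log (q + s) + c * (q + s) + (s * log s - s * c) := fun q ↦ by ring
  have hmax : ∀ q ∈ Icc (0:ℝ) 1, q ≠ qstar →
      -(q + s) * log (q + s) + q * (1 + s) * log (1 + s) + (1 - q) * s * log s <
      -(qstar + s) * log (qstar + s) + qstar * (1 + s) * log (1 + s)
        + (1 - qstar) * s * log s := by
    intro q hqI hne
    rw [hI, hI, hstar, neg_mul_log_add_mul_exp, add_lt_add_iff_right]
    exact neg_mul_log_add_mul_lt_exp (by linarith [hqI.1]) (by rwa [← hstar, ne_eq, add_left_inj])
  refine ⟨⟨by linarith, by linarith⟩, fun q hqI ↦ ?_, fun q hqI heq ↦ ?_⟩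
  · rcases eq_or_ne q qstar with rfl | hne
    · exact le_rfl
    · exact (hmax q hqI hne).le
  · by_contra hne
    exact (hmax q hqI hne).ne heq
end

section
/- Let 0 < s₁ ≤ s₂, with I₁, I₂ as the Poisson mutual information functions with gains α, 1 and dark currents s₁, s₂, and let f₂(q) = (I₂(q) − I₁(q))/q on (0,1]. Then the derivative of f₂ satisfies f₂'(q) = q^{-2}·(α − g₂(q))·(q − s₁·log(1 + q/s₁)), where g₂(x) = (s₂·log(1+x/s₂) − x)/(s₁·log(1+x/s₁) − x). -/
/-!
Writing `I s q := -(q + s) log (q + s) + q (1 + s) log (1 + s) + (1 - q) s log s`, the numerator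
of `f₂` is `N := I s₂ - α I s₁`, and by the quotient rule `q² f₂'(q) = q N'(q) - N(q)`. The combination
`q I'(q) - I(q)` collapses to `s log (1 + q / s) - q`, which is negative for `s, q > 0` since
`log x < x - 1`; dividing by it for `s = s₁` produces the factor `α - g₂(q)`.
-/

open Real Set

noncomputable def poissonInfo (s q : ℝ) : ℝ :=
  -(q + s) * log (q + s) + q * (1 + s) * log (1 + s) + (1 - q) * s * log s

noncomputable def poissonInfoDeriv (s q : ℝ) : ℝ :=
  -(log (q + s) + 1) + (1 + s) * log (1 + s) - s * log s

theorem hasDerivAt_poissonInfo {s q : ℝ} (hqs : q + s ≠ 0) :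
    HasDerivAt (poissonInfo s) (poissonInfoDeriv s q) q := by
  have h := ((hasDerivAt_mul_log hqs).comp q ((hasDerivAt_id q).add_const s)).neg.add
    ((hasDerivAt_mul_const ((1 + s) * log (1 + s))).add
      (((hasDerivAt_id q).const_sub 1).mul_const (s * log s)))
  refine (h.congr_deriv ?_).congr_of_eventuallyEq (.of_forall fun x => ?_)
  · simp only [poissonInfoDeriv]
    ring
  · simp only [poissonInfo, Pi.add_apply, Pi.neg_apply, Function.comp_apply, id]
    ring

theorem mul_poissonInfoDeriv_sub_poissonInfo {s q : ℝ} (hs : s ≠ 0) (hqs : q + s ≠ 0) :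
    q * poissonInfoDeriv s q - poissonInfo s q = s * log (1 + q / s) - q := by
  have hlog : log (1 + q / s) = log (q + s) - log s := by
    rw [← log_div hqs hs, add_div, div_self hs, add_comm]
  rw [poissonInfoDeriv, poissonInfo, hlog]
  ring

theorem mul_log_one_add_div_lt {s q : ℝ} (hs : 0 < s) (hq : q ≠ 0) (hqs : 0 < q + s) :
    s * log (1 + q / s) < q := by
  have hpos : 0 < 1 + q / s := by
    rw [one_add_div hs.ne', add_comm]
    exact div_pos hqs hs
  have hlog : log (1 + q / s) < q / s := by
    simpa using log_lt_sub_one_of_pos hpos (by simpa using div_ne_zero hq hs.ne')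
  calc s * log (1 + q / s) < s * (q / s) := mul_lt_mul_of_pos_left hlog hs
    _ = q := mul_div_cancel₀ q hs.ne'

theorem f2_deriv (s₁ s₂ α : ℝ) (h1 : 0 < s₁) (h12 : s₁ ≤ s₂) :
    ∀ q ∈ Ioc (0:ℝ) 1,
      deriv (fun q : ℝ =>
        ((-(q + s₂) * Real.log (q + s₂) + q * (1 + s₂) * Real.log (1 + s₂)
            + (1 - q) * s₂ * Real.log s₂)
          - α * (-(q + s₁) * Real.log (q + s₁) + q * (1 + s₁) * Real.log (1 + s₁)
            + (1 - q) * s₁ * Real.log s₁)) / q) q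
      = ((α - (s₂ * Real.log (1 + q / s₂) - q) / (s₁ * Real.log (1 + q / s₁) - q))
          * (q - s₁ * Real.log (1 + q / s₁))) / q ^ 2 := by
  rintro q ⟨hq, -⟩
  have h2 : 0 < s₂ := h1.trans_le h12
  have hN : HasDerivAt (fun x => poissonInfo s₂ x - α * poissonInfo s₁ x)
      (poissonInfoDeriv s₂ q - α * poissonInfoDeriv s₁ q) q :=
    (hasDerivAt_poissonInfo (by positivity)).sub
      ((hasDerivAt_poissonInfo (by positivity)).const_mul α)
  refine (hN.div (hasDerivAt_id' q) hq.ne').deriv.trans ?_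
  have hgap₁ := mul_poissonInfoDeriv_sub_poissonInfo h1.ne' (q := q) (by positivity)
  have hgap₂ := mul_poissonInfoDeriv_sub_poissonInfo h2.ne' (q := q) (by positivity)
  have hB : s₁ * log (1 + q / s₁) - q ≠ 0 :=
    (sub_neg.2 (mul_log_one_add_div_lt h1 hq.ne' (by positivity))).ne
  -- keeps `field_simp` from rewriting inside the logarithms
  generalize log (1 + q / s₁) = L₁ at hgap₁ hB ⊢
  generalize log (1 + q / s₂) = L₂ at hgap₂ ⊢
  field_simp
  linear_combination (s₁ * L₁ - q) * hgap₂ - α * (s₁ * L₁ - q) * hgap₁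
end

section
/- Let 0 < s₁ ≤ s₂, with I₁, I₂ as the Poisson mutual information functions with gains α, 1 and dark currents s₁, s₂, and let f₁(q) = (I₁(q) − I₂(q))/(1−q) on [0,1). Then f₁'(q) = (1−q)^{-2}·(α − g₁(q))·((1+s₁)·log((1+s₁)/(q+s₁)) − 1 + q), where g₁(x) = ((1+s₂)log((1+s₂)/(x+s₂)) − 1 + x)/((1+s₁)log((1+s₁)/(x+s₁)) − 1 + x). -/
/-! Writing `f₁ = (α I₁ - I₂)/(1 - q)`, the quotient rule gives the numerator `I + (1 - q) I'`
for each `Iᵢ`, and this combination collapses to `Dᵢ(q) = (1 + sᵢ) log((1 + sᵢ)/(q + sᵢ)) - 1 + q`: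
the `log sᵢ` terms cancel. Hence `f₁' = (α D₁ - D₂)/(1 - q)²`, and factoring out `D₁` is legitimate
because `D₁ > 0` on `[0, 1)` by `log x < x - 1`. -/

open Real Set

-- The paper's `I₂` with dark current `s`; its `I₁` is `α * poissonMI s₁`.
noncomputable def poissonMI (s q : ℝ) : ℝ :=
  -(q + s) * log (q + s) + q * (1 + s) * log (1 + s) + (1 - q) * s * log s

noncomputable def poissonGap (s q : ℝ) : ℝ :=
  (1 + s) * log ((1 + s) / (q + s)) - 1 + q

theorem HasDerivAt.div_one_sub {f : ℝ → ℝ} {f' q : ℝ} (hf : HasDerivAt f f' q) (hq : q ≠ 1) :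
    HasDerivAt (fun x => f x / (1 - x)) ((f q + (1 - q) * f') / (1 - q) ^ 2) q := by
  have hden : HasDerivAt (fun x : ℝ => 1 - x) (-1) q := by
    simpa using (hasDerivAt_id q).const_sub 1
  exact (hf.div hden (sub_ne_zero.mpr hq.symm)).congr_deriv (by ring)

theorem hasDerivAt_poissonMI {s q : ℝ} (hqs : q + s ≠ 0) :
    HasDerivAt (poissonMI s) (-log (q + s) - 1 + (1 + s) * log (1 + s) - s * log s) q := by
  have hlin : HasDerivAt (fun x : ℝ => x + s) 1 q := (hasDerivAt_id q).add_const s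
  have hlog : HasDerivAt (fun x : ℝ => log (x + s)) (1 / (q + s)) q := by
    simpa using hlin.log hqs
  have hent := (hlin.neg.mul hlog).add
    (((hasDerivAt_id q).mul_const ((1 + s) * log (1 + s))).add
      (((hasDerivAt_id q).const_sub 1).mul_const (s * log s)))
  refine (hent.congr_deriv ?_).congr_of_eventuallyEq (.of_forall fun x => ?_)
  · simp only [Pi.neg_apply]
    field_simp
    ring
  · simp only [poissonMI, Pi.add_apply, Pi.mul_apply, Pi.neg_apply, id]
    ring

theorem poissonMI_add_one_sub_mul_deriv {s q : ℝ} (hqs : q + s ≠ 0) (h1s : 1 + s ≠ 0) :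
    poissonMI s q + (1 - q) * (-log (q + s) - 1 + (1 + s) * log (1 + s) - s * log s)
      = poissonGap s q := by
  rw [poissonMI, poissonGap, log_div h1s hqs]
  ring

theorem hasDerivAt_poissonMI_div_one_sub {s q : ℝ} (hqs : q + s ≠ 0) (h1s : 1 + s ≠ 0)
    (hq : q ≠ 1) :
    HasDerivAt (fun x => poissonMI s x / (1 - x)) (poissonGap s q / (1 - q) ^ 2) q := by
  rw [← poissonMI_add_one_sub_mul_deriv hqs h1s]
  exact (hasDerivAt_poissonMI hqs).div_one_sub hq

theorem poissonGap_pos {s q : ℝ} (hqs : 0 < q + s) (h1s : 0 < 1 + s) (hq : q ≠ 1) :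
    0 < poissonGap s q := by
  have hratio : (q + s) / (1 + s) ≠ 1 := fun h =>
    hq (by rw [div_eq_one_iff_eq h1s.ne'] at h; linarith)
  have hlog := log_lt_sub_one_of_pos (div_pos hqs h1s) hratio
  rw [log_div hqs.ne' h1s.ne'] at hlog
  have hscaled : (1 + s) * (log (q + s) - log (1 + s)) < (1 + s) * ((q + s) / (1 + s) - 1) :=
    mul_lt_mul_of_pos_left hlog h1s
  rw [mul_sub (1 + s) _ 1, mul_div_cancel₀ _ h1s.ne'] at hscaled
  rw [poissonGap, log_div h1s.ne' hqs.ne']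
  linarith

theorem f1_deriv (s₁ s₂ α : ℝ) (h1 : 0 < s₁) (h12 : s₁ ≤ s₂) :
    ∀ q ∈ Ico (0:ℝ) 1,
      deriv (fun q : ℝ =>
        (α * (-(q + s₁) * Real.log (q + s₁) + q * (1 + s₁) * Real.log (1 + s₁)
            + (1 - q) * s₁ * Real.log s₁)
          - (-(q + s₂) * Real.log (q + s₂) + q * (1 + s₂) * Real.log (1 + s₂)
            + (1 - q) * s₂ * Real.log s₂)) / (1 - q)) q
      = ((α - ((1 + s₂) * Real.log ((1 + s₂) / (q + s₂)) - 1 + q) /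
            ((1 + s₁) * Real.log ((1 + s₁) / (q + s₁)) - 1 + q))
          * ((1 + s₁) * Real.log ((1 + s₁) / (q + s₁)) - 1 + q)) / (1 - q) ^ 2 := by
  rintro q ⟨hq0, hq1⟩
  have hqs₁ : 0 < q + s₁ := by linarith
  have hqs₂ : 0 < q + s₂ := by linarith
  have hq : q ≠ 1 := hq1.ne
  have hsplit : (fun x : ℝ => (α * poissonMI s₁ x - poissonMI s₂ x) / (1 - x))
      = fun x => α * (poissonMI s₁ x / (1 - x)) - poissonMI s₂ x / (1 - x) := by
    funext x; ring
  have hderiv := ((hasDerivAt_poissonMI_div_one_sub hqs₁.ne' (by linarith) hq).const_mul α).sub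
    (hasDerivAt_poissonMI_div_one_sub hqs₂.ne' (by linarith) hq)
  have hgap := (poissonGap_pos hqs₁ (by linarith) hq).ne'
  simp only [← poissonMI.eq_1, ← poissonGap.eq_1]
  rw [hsplit]
  refine hderiv.deriv.trans ?_
  field_simp
end

section
/- For 0 < s₁ ≤ s₂, define α₄ = s₁/s₂, α₃ = ((1+s₂)log(1+1/s₂) − 1)/((1+s₁)log(1+1/s₁) − 1), α₂ = (s₂ log(1+1/s₂) − 1)/(s₁ log(1+1/s₁) − 1), α₁ = (1+s₁)/(1+s₂). Then α₄ ≤ α₃ ≤ α₂ ≤ α₁ ≤ 1. -/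
/-!
Write `L(s) = log (1 + 1/s)` and `φ(s) = s ((1 + s) L(s) - 1)`. Since `(1 + s)(1 - s L(s)) = 1 - φ(s)`,
`α₃ = α₄ φ(s₂) / φ(s₁)` and `α₂ = α₁ (1 - φ(s₂)) / (1 - φ(s₁))`, so both outer inequalities say that
`φ` is nondecreasing. Indeed `φ' = (1 + 2s) L - 2 ≥ 0`, by the first term of the series
`L(s) = 2 ∑ (2s + 1)^{-(2k+1)} / (2k + 1)`.

The middle inequality says that `((1 + s) L - 1) / (1 - s L) = 1 / U - 1`, with `U = 1/L - s`, is
nonincreasing. Now `U' = 1 / (s (s + 1) L²) - 1`, and `s (s + 1) L² ≤ 1` is `w ≤ sinh w` at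
`w = L / 2`, because `sinh (L / 2) ^ 2 = 1 / (4 s (s + 1))`.
-/

open Real Set

lemma two_div_le_log_one_add_one_div {s : ℝ} (hs : 0 < s) : 2 / (2 * s + 1) ≤ log (1 + 1 / s) := by
  have h := le_hasSum (hasSum_log_one_add_inv hs) 0 fun k _ => by positivity
  simpa [one_div, div_eq_mul_inv] using h

lemma sq_log_le_sq_sub_one_div {x : ℝ} (hx : 0 < x) : log x ^ 2 ≤ (x - 1) ^ 2 / x := by
  set w := log x / 2
  have hexp : exp w ^ 2 = x := by
    rw [← exp_nat_mul, Nat.cast_two, mul_div_cancel₀ _ two_ne_zero, exp_log hx]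
  calc log x ^ 2 = 4 * |w| ^ 2 := by rw [sq_abs]; ring
    _ ≤ 4 * |sinh w| ^ 2 := by
      rw [abs_sinh]
      gcongr
      exact self_le_sinh_iff.2 (abs_nonneg w)
    _ = (x - 1) ^ 2 / x := by
      rw [sq_abs, sinh_eq, exp_neg, ← hexp]
      field_simp
      ring

lemma monotoneOn_Ioi_of_hasDerivAt_nonneg {a : ℝ} {f f' : ℝ → ℝ}
    (hf : ∀ x ∈ Ioi a, HasDerivAt f (f' x) x) (hf' : ∀ x ∈ Ioi a, 0 ≤ f' x) :
    MonotoneOn f (Ioi a) :=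
  monotoneOn_of_hasDerivWithinAt_nonneg (convex_Ioi a)
    (fun x hx => (hf x hx).continuousAt.continuousWithinAt)
    (by simpa only [interior_Ioi] using fun x hx => (hf x hx).hasDerivWithinAt)
    (by simpa only [interior_Ioi] using hf')

section LogOneAddOneDiv

variable {s : ℝ}

lemma log_one_add_one_div_pos (hs : 0 < s) : 0 < log (1 + 1 / s) :=
  log_pos (by simp [hs])

lemma one_lt_one_add_mul_log_one_add_one_div (hs : 0 < s) : 1 < (1 + s) * log (1 + 1 / s) := by
  have h := two_div_le_log_one_add_one_div hs
  rw [div_le_iff₀ (by positivity)] at h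
  nlinarith [log_one_add_one_div_pos hs]

lemma mul_log_one_add_one_div_lt_one (hs : 0 < s) : s * log (1 + 1 / s) < 1 := by
  have h := log_lt_sub_one_of_pos (by positivity : 0 < 1 + 1 / s) (by simp [hs.ne'])
  rw [add_sub_cancel_left, lt_div_iff₀ hs] at h
  linarith

lemma mul_mul_sq_log_one_add_one_div_le_one (hs : 0 < s) :
    s * (s + 1) * log (1 + 1 / s) ^ 2 ≤ 1 := by
  have h := sq_log_le_sq_sub_one_div (by positivity : 0 < 1 + 1 / s)
  rw [add_sub_cancel_left, show (1 / s) ^ 2 / (1 + 1 / s) = 1 / (s * (s + 1)) by field_simp,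
    le_div_iff₀' (by positivity)] at h
  exact h

lemma hasDerivAt_log_one_add_one_div (hs : 0 < s) :
    HasDerivAt (fun s => log (1 + 1 / s)) (-(s * (s + 1))⁻¹) s := by
  have h := ((hasDerivAt_inv hs.ne').const_add 1).log (by positivity)
  convert h using 1
  · simp only [one_div]
  · field_simp

lemma monotoneOn_mul_one_add_mul_log_one_add_one_div_sub_one :
    MonotoneOn (fun s => s * ((1 + s) * log (1 + 1 / s) - 1)) (Ioi 0) := by
  refine monotoneOn_Ioi_of_hasDerivAt_nonneg (f' := fun s => (1 + 2 * s) * log (1 + 1 / s) - 2)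
    (fun s (hs : 0 < s) => ?_) (fun s (hs : 0 < s) => ?_)
  · have h := (hasDerivAt_id s).mul
      ((((hasDerivAt_id s).const_add 1).mul (hasDerivAt_log_one_add_one_div hs)).sub_const 1)
    exact h.congr_deriv (by simp only [id, Pi.mul_apply]; field_simp; ring)
  · have h := two_div_le_log_one_add_one_div hs
    rw [div_le_iff₀ (by positivity)] at h
    linarith

lemma monotoneOn_inv_log_one_add_one_div_sub :
    MonotoneOn (fun s => (log (1 + 1 / s))⁻¹ - s) (Ioi 0) := by
  refine monotoneOn_Ioi_of_hasDerivAt_nonneg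
    (f' := fun s => (s * (s + 1) * log (1 + 1 / s) ^ 2)⁻¹ - 1)
    (fun s (hs : 0 < s) => ?_) (fun s (hs : 0 < s) => ?_)
  · have h := ((hasDerivAt_log_one_add_one_div hs).inv
      (log_one_add_one_div_pos hs).ne').sub (hasDerivAt_id s)
    exact h.congr_deriv (by field_simp)
  · have hpos : 0 < s * (s + 1) * log (1 + 1 / s) ^ 2 := by
      have := log_one_add_one_div_pos hs
      positivity
    simpa using one_le_inv_iff₀.2 ⟨hpos, mul_mul_sq_log_one_add_one_div_le_one hs⟩

end LogOneAddOneDiv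

theorem breakpoints_order (s₁ s₂ : ℝ) (h1 : 0 < s₁) (h12 : s₁ ≤ s₂) :
    s₁ / s₂ ≤ ((1 + s₂) * Real.log (1 + 1 / s₂) - 1) / ((1 + s₁) * Real.log (1 + 1 / s₁) - 1) ∧
    ((1 + s₂) * Real.log (1 + 1 / s₂) - 1) / ((1 + s₁) * Real.log (1 + 1 / s₁) - 1) ≤
      (s₂ * Real.log (1 + 1 / s₂) - 1) / (s₁ * Real.log (1 + 1 / s₁) - 1) ∧
    (s₂ * Real.log (1 + 1 / s₂) - 1) / (s₁ * Real.log (1 + 1 / s₁) - 1) ≤ (1 + s₁) / (1 + s₂) ∧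
    (1 + s₁) / (1 + s₂) ≤ 1 := by
  have h2 : 0 < s₂ := h1.trans_le h12
  have hφ := monotoneOn_mul_one_add_mul_log_one_add_one_div_sub_one h1 h2 h12
  have hinv := monotoneOn_inv_log_one_add_one_div_sub h1 h2 h12
  simp only at hφ hinv
  set L₁ := log (1 + 1 / s₁)
  set L₂ := log (1 + 1 / s₂)
  have hL₁ : 0 < L₁ := log_one_add_one_div_pos h1
  have hL₂ : 0 < L₂ := log_one_add_one_div_pos h2
  have hf₁ : 0 < (1 + s₁) * L₁ - 1 := sub_pos.2 (one_lt_one_add_mul_log_one_add_one_div h1)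
  have hg₁ : 0 < 1 - s₁ * L₁ := sub_pos.2 (mul_log_one_add_one_div_lt_one h1)
  have hinv' : L₂ - s₁ * L₁ * L₂ ≤ L₁ - s₂ * L₁ * L₂ := by
    have := mul_le_mul_of_nonneg_left hinv (mul_pos hL₁ hL₂).le
    field_simp at this
    linarith
  rw [← neg_div_neg_eq (s₂ * L₂ - 1), neg_sub, neg_sub]
  refine ⟨?_, ?_, ?_, ?_⟩
  · rw [div_le_div_iff₀ h2 hf₁]
    linarith
  · rw [div_le_div_iff₀ hf₁ hg₁]
    linarith
  · rw [div_le_div_iff₀ hg₁ (by positivity)]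
    linarith
  · rw [div_le_one (by positivity)]
    linarith
end

section
/- Let 0 < s₁ ≤ s₂ and α ≥ (1+s₁)/(1+s₂). With I₁, I₂ the Poisson mutual information functions (gains α, 1; dark currents s₁, s₂), the function I₁ − I₂ is concave on [0,1]; hence it equals its upper concave envelope on [0,1]. -/
open Real Set

lemma poissonInfo_eq_negMulLog_add (s q : ℝ) :
    poissonInfo s q =
      negMulLog (q + s) + ((1 + s) * log (1 + s) - s * log s) * q + s * log s := by
  rw [poissonInfo, negMulLog]; ring

lemma concaveOn_smul_negMulLog_sub {D : Set ℝ} (hD : Convex ℝ D) {a b α : ℝ}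
    (ha : ∀ x ∈ D, 0 < x + a) (hb : ∀ x ∈ D, 0 < x + b)
    (hab : ∀ x ∈ D, x + a ≤ α * (x + b)) :
    ConcaveOn ℝ D (fun x => α * negMulLog (x + a) - negMulLog (x + b)) := by
  have hderiv (c x : ℝ) (hc : 0 < x + c) :
      HasDerivAt (fun y => negMulLog (y + c)) (-log (x + c) - 1) x :=
    (hasDerivAt_negMulLog hc.ne').comp_add_const x c
  have hderiv2 (c x : ℝ) (hc : 0 < x + c) :
      HasDerivAt (fun y => -log (y + c) - 1) (-(x + c)⁻¹) x :=
    (((hasDerivAt_log hc.ne').comp_add_const x c).neg).sub_const 1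
  refine concaveOn_of_hasDerivWithinAt2_nonpos hD (by fun_prop)
    (f' := fun x => α * (-log (x + a) - 1) - (-log (x + b) - 1))
    (f'' := fun x => α * -(x + a)⁻¹ - -(x + b)⁻¹)
    (fun x hx => (((hderiv a x (ha x (interior_subset hx))).const_mul α).sub
      (hderiv b x (hb x (interior_subset hx)))).hasDerivWithinAt)
    (fun x hx => (((hderiv2 a x (ha x (interior_subset hx))).const_mul α).sub
      (hderiv2 b x (hb x (interior_subset hx)))).hasDerivWithinAt) ?_
  intro x hx
  have hxa := ha x (interior_subset hx)
  have hxb := hb x (interior_subset hx)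
  have : (x + b)⁻¹ ≤ α * (x + a)⁻¹ := by
    rw [← div_eq_mul_inv, le_div_iff₀ hxa, inv_mul_le_iff₀ hxb, mul_comm]
    exact hab x (interior_subset hx)
  linarith

lemma concaveOn_smul_poissonInfo_sub {D : Set ℝ} (hD : Convex ℝ D) {s₁ s₂ α : ℝ}
    (h₁ : ∀ x ∈ D, 0 < x + s₁) (h₂ : ∀ x ∈ D, 0 < x + s₂)
    (h₁₂ : ∀ x ∈ D, x + s₁ ≤ α * (x + s₂)) :
    ConcaveOn ℝ D (fun q => α * poissonInfo s₁ q - poissonInfo s₂ q) := by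
  have haffine := (LinearMap.lsmul ℝ ℝ (α * ((1 + s₁) * log (1 + s₁) - s₁ * log s₁)
    - ((1 + s₂) * log (1 + s₂) - s₂ * log s₂))).concaveOn hD
  refine (((concaveOn_smul_negMulLog_sub hD h₁ h₂ h₁₂).add haffine).add_const
    (α * (s₁ * log s₁) - s₂ * log s₂)).congr fun q _ => ?_
  simp only [poissonInfo_eq_negMulLog_add, Pi.add_apply, LinearMap.lsmul_apply, smul_eq_mul]
  ring

theorem ConcaveOn.eq_sInf_concaveOn_majorants {𝕜 E : Type*} [Semiring 𝕜] [PartialOrder 𝕜]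
    [AddCommMonoid E] [SMul 𝕜 E] [SMul 𝕜 ℝ] {s : Set E} {f : E → ℝ} (hf : ConcaveOn 𝕜 s f)
    {q : E} (hq : q ∈ s) :
    f q = sInf {y : ℝ | ∃ g : E → ℝ, ConcaveOn 𝕜 s g ∧ (∀ x ∈ s, f x ≤ g x) ∧ y = g q} := by
  refine (IsLeast.csInf_eq ?_).symm
  refine ⟨⟨f, hf, fun _ _ => le_rfl, rfl⟩, ?_⟩
  rintro _ ⟨g, -, hfg, rfl⟩
  exact hfg q hq

lemma add_le_mul_add_of_mem_Icc {s₁ s₂ α x : ℝ} (h₁ : 0 < s₁) (h₁₂ : s₁ ≤ s₂)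
    (hα : (1 + s₁) / (1 + s₂) ≤ α) (hx : x ∈ Icc (0 : ℝ) 1) : x + s₁ ≤ α * (x + s₂) := by
  have hα' : 1 + s₁ ≤ α * (1 + s₂) := (div_le_iff₀ (by linarith)).mp hα
  -- both sides are affine in `x`, so it suffices to compare them at `x = 0` and `x = 1`
  have h₀ : s₁ ≤ α * s₂ := by nlinarith
  nlinarith [hx.1, hx.2]

theorem less_noisy_concave (s₁ s₂ α : ℝ) (h1 : 0 < s₁) (h12 : s₁ ≤ s₂)
    (hα : (1 + s₁) / (1 + s₂) ≤ α) :
    ConcaveOn ℝ (Icc (0:ℝ) 1) (fun q : ℝ =>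
      α * (-(q + s₁) * Real.log (q + s₁) + q * (1 + s₁) * Real.log (1 + s₁)
        + (1 - q) * s₁ * Real.log s₁)
      - (-(q + s₂) * Real.log (q + s₂) + q * (1 + s₂) * Real.log (1 + s₂)
        + (1 - q) * s₂ * Real.log s₂)) ∧
    ∀ q ∈ Icc (0:ℝ) 1,
      (α * (-(q + s₁) * Real.log (q + s₁) + q * (1 + s₁) * Real.log (1 + s₁)
        + (1 - q) * s₁ * Real.log s₁)
      - (-(q + s₂) * Real.log (q + s₂) + q * (1 + s₂) * Real.log (1 + s₂)
        + (1 - q) * s₂ * Real.log s₂)) =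
      sInf {y : ℝ | ∃ g : ℝ → ℝ, ConcaveOn ℝ (Icc (0:ℝ) 1) g ∧
        (∀ x ∈ Icc (0:ℝ) 1,
          (α * (-(x + s₁) * Real.log (x + s₁) + x * (1 + s₁) * Real.log (1 + s₁)
            + (1 - x) * s₁ * Real.log s₁)
          - (-(x + s₂) * Real.log (x + s₂) + x * (1 + s₂) * Real.log (1 + s₂)
            + (1 - x) * s₂ * Real.log s₂)) ≤ g x) ∧ y = g q} := by
  have hconc : ConcaveOn ℝ (Icc (0:ℝ) 1) (fun q => α * poissonInfo s₁ q - poissonInfo s₂ q) :=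
    concaveOn_smul_poissonInfo_sub (convex_Icc 0 1)
      (fun x hx => by linarith [hx.1]) (fun x hx => by linarith [hx.1])
      (fun x hx => add_le_mul_add_of_mem_Icc h1 h12 hα hx)
  exact ⟨hconc, fun q hq => hconc.eq_sInf_concaveOn_majorants hq⟩
end

section
/- Let 0 < s₁ ≤ s₂ and α ≥ α₂ := (s₂ log(1+1/s₂) − 1)/(s₁ log(1+1/s₁) − 1). Then I₁(q) ≥ I₂(q) for all q ∈ [0,1], where I₁, I₂ are the Poisson mutual information functions with gains α, 1 and dark currents s₁, s₂. -/
open Real Set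

/-! `I_s(q)` is the Jensen gap of the concave function `negMulLog` at the point
`q • (1 + s) + (1 - q) • s`, so it is nonnegative and vanishes at `q = 0, 1`. Its second
derivative is `-(q + s)⁻¹`. With `β = α₂`, which is `≤ 1` because `s ↦ s log (1 + 1 / s)`
increases, the second derivative of `D = I₂ - β I₁` has the sign of `β (q + s₂) - (q + s₁)`, a
nonincreasing function of `q`: `D` is convex, then concave. Since `α₂` is exactly the ratio of the
slopes of `I₂` and `I₁` at `q = 1`, `D'(1) = 0`, so `D'` is nonpositive, then nonnegative, and
`D(0) = D(1) = 0` gives `D ≤ 0`. Finally `I₂ ≤ α₂ I₁ ≤ α I₁` as `I₁ ≥ 0`. -/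

/-- On `s`, `f` changes sign at most once, from `≤ 0` to `≥ 0`. -/
def SignChangesUpOn (f : ℝ → ℝ) (s : Set ℝ) : Prop :=
  ∀ x ∈ s, ∀ y ∈ s, x ≤ y → 0 < f x → 0 ≤ f y

theorem monotoneOn_of_forall_hasDerivAt_nonneg {f f' : ℝ → ℝ} {D : Set ℝ} (hD : Convex ℝ D)
    (hf : ∀ x ∈ D, HasDerivAt f (f' x) x) (hf' : ∀ x ∈ D, 0 ≤ f' x) : MonotoneOn f D :=
  monotoneOn_of_hasDerivWithinAt_nonneg hD
    (fun x hx ↦ (hf x hx).continuousAt.continuousWithinAt)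
    (fun x hx ↦ (hf x (interior_subset hx)).hasDerivWithinAt)
    fun x hx ↦ hf' x (interior_subset hx)

theorem antitoneOn_of_forall_hasDerivAt_nonpos {f f' : ℝ → ℝ} {D : Set ℝ} (hD : Convex ℝ D)
    (hf : ∀ x ∈ D, HasDerivAt f (f' x) x) (hf' : ∀ x ∈ D, f' x ≤ 0) : AntitoneOn f D :=
  antitoneOn_of_hasDerivWithinAt_nonpos hD
    (fun x hx ↦ (hf x hx).continuousAt.continuousWithinAt)
    (fun x hx ↦ (hf x (interior_subset hx)).hasDerivWithinAt)
    fun x hx ↦ hf' x (interior_subset hx)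

theorem signChangesUpOn_of_hasDerivAt {g g' : ℝ → ℝ} {a b : ℝ}
    (hg' : SignChangesUpOn (-g') (Icc a b)) (hg : ∀ x ∈ Icc a b, HasDerivAt g (g' x) x)
    (hb : 0 ≤ g b) : SignChangesUpOn g (Icc a b) := by
  intro x hx y hy hxy hgx
  by_cases h : ∃ t ∈ Icc a y, g' t < 0
  · obtain ⟨t, ht, hneg⟩ := h
    have htb : t ≤ b := ht.2.trans hy.2
    have hsub : Icc t b ⊆ Icc a b := Icc_subset_Icc_left ht.1
    have hanti : AntitoneOn g (Icc t b) :=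
      antitoneOn_of_forall_hasDerivAt_nonpos (convex_Icc t b) (fun z hz ↦ hg z (hsub hz))
        fun z hz ↦ by simpa using hg' t ⟨ht.1, htb⟩ z (hsub hz) hz.1 (by simpa using hneg)
    exact hb.trans (hanti ⟨ht.2, hy.2⟩ (right_mem_Icc.2 htb) hy.2)
  · push Not at h
    have hmono : MonotoneOn g (Icc x y) :=
      monotoneOn_of_forall_hasDerivAt_nonneg (convex_Icc x y)
        (fun z hz ↦ hg z ⟨hx.1.trans hz.1, hz.2.trans hy.2⟩)
        fun z hz ↦ h z ⟨hx.1.trans hz.1, hz.2⟩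
    exact hgx.le.trans (hmono (left_mem_Icc.2 hxy) (right_mem_Icc.2 hxy) hxy)

theorem SignChangesUpOn.nonpos_of_hasDerivAt {f f' : ℝ → ℝ} {a b : ℝ}
    (hf' : SignChangesUpOn f' (Icc a b)) (hf : ∀ x ∈ Icc a b, HasDerivAt f (f' x) x)
    (ha : f a ≤ 0) (hb : f b ≤ 0) {q : ℝ} (hq : q ∈ Icc a b) : f q ≤ 0 := by
  by_cases h : ∃ t ∈ Icc a q, 0 < f' t
  · obtain ⟨t, ht, hpos⟩ := h
    have hsub : Icc q b ⊆ Icc a b := Icc_subset_Icc_left hq.1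
    have hmono : MonotoneOn f (Icc q b) :=
      monotoneOn_of_forall_hasDerivAt_nonneg (convex_Icc q b) (fun x hx ↦ hf x (hsub hx))
        fun x hx ↦ hf' t ⟨ht.1, ht.2.trans hq.2⟩ x (hsub hx) (ht.2.trans hx.1) hpos
    exact (hmono (left_mem_Icc.2 hq.2) (right_mem_Icc.2 hq.2) hq.2).trans hb
  · push Not at h
    have hanti : AntitoneOn f (Icc a q) :=
      antitoneOn_of_forall_hasDerivAt_nonpos (convex_Icc a q)
        (fun x hx ↦ hf x (Icc_subset_Icc_right hq.2 hx)) h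
    exact (hanti (left_mem_Icc.2 hq.1) (right_mem_Icc.2 hq.1) hq.1).trans ha

theorem mul_log_one_add_inv_lt_one {s : ℝ} (hs : 0 < s) : s * log (1 + 1 / s) < 1 := by
  have h := log_lt_sub_one_of_pos (x := 1 + 1 / s) (by positivity) (by simp [hs.ne'])
  calc s * log (1 + 1 / s) < s * (1 / s) := by gcongr; linarith
    _ = 1 := mul_one_div_cancel hs.ne'

/-- `s log (1 + 1 / s)` is the slope of `log` between `1` and `1 + 1 / s`, and `log` is concave. -/
theorem mul_log_one_add_inv_le {s t : ℝ} (hs : 0 < s) (hst : s ≤ t) :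
    s * log (1 + 1 / s) ≤ t * log (1 + 1 / t) := by
  have ht : 0 < t := hs.trans_le hst
  have key := strictConcaveOn_log_Ioi.concaveOn.slope_anti (x := 1) (mem_Ioi.2 one_pos)
    ⟨mem_Ioi.2 (by positivity : (0 : ℝ) < 1 + 1 / t), by simp [ht.ne']⟩
    ⟨mem_Ioi.2 (by positivity : (0 : ℝ) < 1 + 1 / s), by simp [hs.ne']⟩
    (by gcongr : 1 + 1 / t ≤ 1 + 1 / s)
  simpa [slope_def_field, mul_comm] using key

noncomputable def poissonMutualInfo (s q : ℝ) : ℝ :=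
  negMulLog (q + s) - q * negMulLog (1 + s) - (1 - q) * negMulLog s

noncomputable def poissonMutualInfoDeriv (s q : ℝ) : ℝ :=
  -log (q + s) - 1 - negMulLog (1 + s) + negMulLog s

theorem poissonMutualInfo_eq (s q : ℝ) : poissonMutualInfo s q =
    -(q + s) * log (q + s) + q * (1 + s) * log (1 + s) + (1 - q) * s * log s := by
  simp only [poissonMutualInfo, negMulLog]
  ring

@[simp] theorem poissonMutualInfo_zero (s : ℝ) : poissonMutualInfo s 0 = 0 := by
  simp [poissonMutualInfo]

@[simp] theorem poissonMutualInfo_one (s : ℝ) : poissonMutualInfo s 1 = 0 := by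
  simp [poissonMutualInfo, add_comm]

theorem poissonMutualInfo_nonneg {s q : ℝ} (hs : 0 ≤ s) (hq : q ∈ Icc (0 : ℝ) 1) :
    0 ≤ poissonMutualInfo s q := by
  have h := concaveOn_negMulLog.2 (mem_Ici.2 (by linarith : (0 : ℝ) ≤ 1 + s)) (mem_Ici.2 hs)
    hq.1 (sub_nonneg.2 hq.2) (add_sub_cancel q 1)
  rw [smul_eq_mul, smul_eq_mul, smul_eq_mul, smul_eq_mul,
    show q * (1 + s) + (1 - q) * s = q + s by ring] at h
  rw [poissonMutualInfo]
  linarith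

theorem hasDerivAt_poissonMutualInfo {s q : ℝ} (h : q + s ≠ 0) :
    HasDerivAt (poissonMutualInfo s) (poissonMutualInfoDeriv s q) q := by
  have h₁ := (hasDerivAt_negMulLog h).comp q ((hasDerivAt_id' q).add_const s)
  have h₂ := (hasDerivAt_id' q).mul_const (negMulLog (1 + s))
  have h₃ := ((hasDerivAt_id' q).const_sub 1).mul_const (negMulLog s)
  refine ((h₁.sub h₂).sub h₃).congr_deriv ?_
  rw [poissonMutualInfoDeriv]
  ring

theorem hasDerivAt_poissonMutualInfoDeriv {s q : ℝ} (h : q + s ≠ 0) :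
    HasDerivAt (poissonMutualInfoDeriv s) (-(q + s)⁻¹) q := by
  have h₁ := ((hasDerivAt_id' q).add_const s).log h
  exact (((h₁.neg.sub_const 1).sub_const _).add_const _).congr_deriv (by rw [one_div])

theorem poissonMutualInfoDeriv_one {s : ℝ} (hs : 0 < s) :
    poissonMutualInfoDeriv s 1 = s * log (1 + 1 / s) - 1 := by
  rw [show 1 + 1 / s = (1 + s) / s by field_simp; ring, log_div (by positivity) hs.ne',
    poissonMutualInfoDeriv, negMulLog, negMulLog, add_comm 1 s]
  ring

theorem signChangesUpOn_inv_sub_mul_inv {s₁ s₂ β : ℝ} (hs₁ : 0 < s₁) (hs₂ : 0 < s₂)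
    (hβ : β ≤ 1) :
    SignChangesUpOn (fun t ↦ (t + s₂)⁻¹ - β * (t + s₁)⁻¹) (Ici 0) := by
  intro x hx y hy hxy h
  have hx₁ : 0 < x + s₁ := by linarith [mem_Ici.1 hx]
  have hx₂ : 0 < x + s₂ := by linarith [mem_Ici.1 hx]
  have hy₁ : 0 < y + s₁ := by linarith [mem_Ici.1 hy]
  have hy₂ : 0 < y + s₂ := by linarith [mem_Ici.1 hy]
  rw [sub_pos, ← div_eq_mul_inv, inv_eq_one_div, div_lt_div_iff₀ hx₁ hx₂] at h
  rw [sub_nonneg, ← div_eq_mul_inv, inv_eq_one_div, div_le_div_iff₀ hy₁ hy₂]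
  nlinarith

theorem poissonMutualInfo_le_mul_of_slope_eq {s₁ s₂ β : ℝ} (hs₁ : 0 < s₁) (hs₂ : 0 < s₂)
    (hβ : β ≤ 1) (hslope : s₂ * log (1 + 1 / s₂) - 1 = β * (s₁ * log (1 + 1 / s₁) - 1))
    {q : ℝ} (hq : q ∈ Icc (0 : ℝ) 1) :
    poissonMutualInfo s₂ q ≤ β * poissonMutualInfo s₁ q := by
  have hne : ∀ {s t : ℝ}, 0 < s → t ∈ Icc (0 : ℝ) 1 → t + s ≠ 0 := fun hs ht ↦ by
    linarith [ht.1]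
  have hD : ∀ t ∈ Icc (0 : ℝ) 1, HasDerivAt
      (fun t ↦ poissonMutualInfo s₂ t - β * poissonMutualInfo s₁ t)
      (poissonMutualInfoDeriv s₂ t - β * poissonMutualInfoDeriv s₁ t) t := fun t ht ↦
    (hasDerivAt_poissonMutualInfo (hne hs₂ ht)).sub
      ((hasDerivAt_poissonMutualInfo (hne hs₁ ht)).const_mul β)
  have hD' : ∀ t ∈ Icc (0 : ℝ) 1, HasDerivAt
      (fun t ↦ poissonMutualInfoDeriv s₂ t - β * poissonMutualInfoDeriv s₁ t)
      (-(t + s₂)⁻¹ - β * -(t + s₁)⁻¹) t := fun t ht ↦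
    (hasDerivAt_poissonMutualInfoDeriv (hne hs₂ ht)).sub
      ((hasDerivAt_poissonMutualInfoDeriv (hne hs₁ ht)).const_mul β)
  have hD'_one : poissonMutualInfoDeriv s₂ 1 - β * poissonMutualInfoDeriv s₁ 1 = 0 := by
    rw [poissonMutualInfoDeriv_one hs₁, poissonMutualInfoDeriv_one hs₂, hslope, sub_self]
  have hsign := signChangesUpOn_of_hasDerivAt
    (fun x hx y hy ↦ by
      simpa using signChangesUpOn_inv_sub_mul_inv hs₁ hs₂ hβ x hx.1 y hy.1) hD' hD'_one.ge
  simpa using hsign.nonpos_of_hasDerivAt hD (by simp) (by simp) hq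

theorem more_capable (s₁ s₂ α : ℝ) (h1 : 0 < s₁) (h12 : s₁ ≤ s₂)
    (hα : (s₂ * Real.log (1 + 1 / s₂) - 1) / (s₁ * Real.log (1 + 1 / s₁) - 1) ≤ α) :
    ∀ q ∈ Icc (0:ℝ) 1,
      (-(q + s₂) * Real.log (q + s₂) + q * (1 + s₂) * Real.log (1 + s₂)
        + (1 - q) * s₂ * Real.log s₂) ≤
      α * (-(q + s₁) * Real.log (q + s₁) + q * (1 + s₁) * Real.log (1 + s₁)
        + (1 - q) * s₁ * Real.log s₁) := by
  intro q hq
  have h2 : 0 < s₂ := h1.trans_le h12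
  set A₁ := s₁ * log (1 + 1 / s₁) - 1
  set A₂ := s₂ * log (1 + 1 / s₂) - 1
  have hA₁ : A₁ < 0 := sub_neg.2 (mul_log_one_add_inv_lt_one h1)
  have hβ : A₂ / A₁ ≤ 1 :=
    (div_le_one_of_neg hA₁).2 (by linarith [mul_log_one_add_inv_le h1 h12])
  rw [← poissonMutualInfo_eq, ← poissonMutualInfo_eq]
  calc poissonMutualInfo s₂ q
      ≤ A₂ / A₁ * poissonMutualInfo s₁ q := poissonMutualInfo_le_mul_of_slope_eq h1 h2 hβ
        (div_mul_cancel₀ A₂ hA₁.ne).symm hq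
    _ ≤ α * poissonMutualInfo s₁ q := by gcongr; exact poissonMutualInfo_nonneg h1.le hq
end

section
/- Fix k ≥ 1. For b > 0, let V(b) = 1 − (1/(k b²)) ∫₀^{b} ∫_{s₁}^{kb} ((1+s₁)/(1+s₂) − s₁/s₂) ds₂ ds₁. Then V(b) → 1 as b → ∞. -/
open Real Set Filter

lemma integral_one_add_inv_aux (a c : ℝ) (ha : 0 ≤ a) (hc : a ≤ c) :
    ∫ x in a..c, (1 + x)⁻¹ = Real.log ((1 + c) / (1 + a)) := by
  have h := intervalIntegral.integral_comp_add_left (a := a) (b := c) (fun x => x⁻¹) 1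
  rw [h]
  apply integral_inv
  rw [Set.uIcc_of_le (by linarith : (1:ℝ) + a ≤ 1 + c)]
  rintro ⟨h1, h2⟩
  linarith

lemma inner_bound (k b s₁ : ℝ) (hk : 1 ≤ k) (hb : 1 ≤ b) (hs₁ : s₁ ∈ Set.Icc (0:ℝ) b) :
    0 ≤ (∫ s₂ in s₁..(k * b), ((1 + s₁) / (1 + s₂) - s₁ / s₂)) ∧
      (∫ s₂ in s₁..(k * b), ((1 + s₁) / (1 + s₂) - s₁ / s₂)) ≤ Real.log (1 + k * b) := by
  obtain ⟨hs0, hsb⟩ := hs₁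
  have hbpos : (0:ℝ) < b := lt_of_lt_of_le one_pos hb
  have hkb1 : (1:ℝ) ≤ k * b := by nlinarith
  have hskb : s₁ ≤ k * b := by nlinarith
  rcases eq_or_lt_of_le hs0 with h0 | h0
  · -- s₁ = 0
    subst h0
    have heq : ∀ s₂ : ℝ, (1 + (0:ℝ)) / (1 + s₂) - 0 / s₂ = (1 + s₂)⁻¹ := by
      intro s₂; simp
    simp_rw [heq]
    rw [integral_one_add_inv_aux 0 (k * b) le_rfl (by linarith)]
    constructor
    · apply Real.log_nonneg
      rw [le_div_iff₀ (by norm_num)]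
      linarith
    · apply Real.log_le_log (by positivity)
      apply div_le_self (by linarith)
      norm_num
  · -- 0 < s₁
    have hrw : ∀ x ∈ Set.uIcc s₁ (k * b),
        (1 + s₁) / (1 + x) - s₁ / x = (x - s₁) / (x * (1 + x)) := by
      intro x hx
      rw [Set.uIcc_of_le hskb] at hx
      have hx0 : 0 < x := lt_of_lt_of_le h0 hx.1
      field_simp
      ring
    have hcont : ContinuousOn (fun x => (1 + s₁) / (1 + x) - s₁ / x) (Set.uIcc s₁ (k * b)) := by
      apply ContinuousOn.sub
      · apply ContinuousOn.div continuousOn_const (by fun_prop)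
        intro x hx
        rw [Set.uIcc_of_le hskb] at hx
        have : 0 < x := lt_of_lt_of_le h0 hx.1
        positivity
      · apply ContinuousOn.div continuousOn_const continuousOn_id
        intro x hx
        rw [Set.uIcc_of_le hskb] at hx
        have : 0 < x := lt_of_lt_of_le h0 hx.1
        exact ne_of_gt this
    have hint : IntervalIntegrable (fun x => (1 + s₁) / (1 + x) - s₁ / x) MeasureTheory.volume s₁ (k * b) :=
      hcont.intervalIntegrable
    have hcont2 : ContinuousOn (fun x : ℝ => (1 + x)⁻¹) (Set.uIcc s₁ (k * b)) := by
      apply ContinuousOn.inv₀ (by fun_prop)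
      intro x hx
      rw [Set.uIcc_of_le hskb] at hx
      have : 0 < x := lt_of_lt_of_le h0 hx.1
      positivity
    have hint2 : IntervalIntegrable (fun x : ℝ => (1 + x)⁻¹) MeasureTheory.volume s₁ (k * b) :=
      hcont2.intervalIntegrable
    constructor
    · apply intervalIntegral.integral_nonneg hskb
      intro x hx
      have hx0 : 0 < x := lt_of_lt_of_le h0 hx.1
      rw [hrw x (by rw [Set.uIcc_of_le hskb]; exact hx)]
      apply div_nonneg (by linarith [hx.1]) (by positivity)
    · have hle : (∫ s₂ in s₁..(k * b), ((1 + s₁) / (1 + s₂) - s₁ / s₂)) ≤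
          ∫ x in s₁..(k * b), (1 + x)⁻¹ := by
        apply intervalIntegral.integral_mono_on hskb hint hint2
        intro x hx
        have hx0 : 0 < x := lt_of_lt_of_le h0 hx.1
        rw [hrw x (by rw [Set.uIcc_of_le hskb]; exact hx)]
        rw [div_le_iff₀ (by positivity)]
        have : (1 + x)⁻¹ * (x * (1 + x)) = x := by field_simp
        rw [this]
        linarith
      refine hle.trans ?_
      rw [integral_one_add_inv_aux s₁ (k * b) (le_of_lt h0) hskb]
      apply Real.log_le_log (by positivity)
      apply div_le_self (by linarith)
      linarith

theorem volume_fraction_tendsto_one (k : ℝ) (hk : 1 ≤ k) :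
    Tendsto (fun b : ℝ =>
      1 - (1 / (k * b ^ 2)) *
        ∫ s₁ in (0:ℝ)..b, ∫ s₂ in s₁..(k * b), ((1 + s₁) / (1 + s₂) - s₁ / s₂))
      atTop (nhds 1) := by
  have hk0 : (0:ℝ) < k := lt_of_lt_of_le one_pos hk
  set I : ℝ → ℝ := fun b =>
    ∫ s₁ in (0:ℝ)..b, ∫ s₂ in s₁..(k * b), ((1 + s₁) / (1 + s₂) - s₁ / s₂) with hI
  have bound : ∀ b : ℝ, 1 ≤ b → 0 ≤ I b ∧ I b ≤ b * Real.log (1 + k * b) := by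
    intro b hb
    have hbpos : (0:ℝ) < b := lt_of_lt_of_le one_pos hb
    have hkb1 : (1:ℝ) ≤ k * b := by nlinarith
    have hLnn : 0 ≤ Real.log (1 + k * b) := Real.log_nonneg (by linarith)
    by_cases hJ : IntervalIntegrable
        (fun s₁ => ∫ s₂ in s₁..(k * b), ((1 + s₁) / (1 + s₂) - s₁ / s₂))
        MeasureTheory.volume 0 b
    · constructor
      · apply intervalIntegral.integral_nonneg (le_of_lt hbpos)
        intro x hx
        exact (inner_bound k b x hk hb hx).1
      · have h2 : I b ≤ ∫ _ in (0:ℝ)..b, Real.log (1 + k * b) := by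
          apply intervalIntegral.integral_mono_on (le_of_lt hbpos) hJ intervalIntegrable_const
          intro x hx
          exact (inner_bound k b x hk hb hx).2
        rwa [intervalIntegral.integral_const, sub_zero, smul_eq_mul] at h2
    · have : I b = 0 := intervalIntegral.integral_undef hJ
      rw [this]
      exact ⟨le_rfl, by positivity⟩
  have hkb_top : Tendsto (fun b : ℝ => k * b) atTop atTop :=
    Tendsto.const_mul_atTop hk0 tendsto_id
  have h2 : Tendsto (fun b : ℝ => 1 + k * b) atTop atTop :=
    tendsto_atTop_add_const_left _ 1 hkb_top
  have h3 : Tendsto (fun b : ℝ => Real.log (1 + k * b) / (1 + k * b)) atTop (nhds 0) :=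
    (Real.isLittleO_log_id_atTop.tendsto_div_nhds_zero).comp h2
  have h4 : Tendsto (fun b : ℝ => (1 + k * b) / (k * b)) atTop (nhds 1) := by
    have h5 : Tendsto (fun b : ℝ => (k * b)⁻¹ + 1) atTop (nhds (0 + 1)) :=
      (tendsto_inv_atTop_zero.comp hkb_top).add tendsto_const_nhds
    rw [zero_add] at h5
    apply h5.congr'
    filter_upwards [eventually_gt_atTop 0] with b hb
    have hkb : k * b ≠ 0 := by positivity
    field_simp
  have h6 : Tendsto (fun b : ℝ => Real.log (1 + k * b) / (k * b)) atTop (nhds 0) := by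
    have := h3.mul h4
    rw [mul_one] at this
    apply this.congr'
    filter_upwards [eventually_gt_atTop 0] with b hb
    have hkb : k * b ≠ 0 := by positivity
    have h1kb : (1 : ℝ) + k * b ≠ 0 := by positivity
    field_simp
  have hmain : Tendsto (fun b : ℝ => (1 / (k * b ^ 2)) * I b) atTop (nhds 0) := by
    apply squeeze_zero' (g := fun b : ℝ => Real.log (1 + k * b) / (k * b))
    · filter_upwards [eventually_ge_atTop 1] with b hb
      have hbpos : (0:ℝ) < b := lt_of_lt_of_le one_pos hb
      exact mul_nonneg (by positivity) (bound b hb).1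
    · filter_upwards [eventually_ge_atTop 1] with b hb
      have hbpos : (0:ℝ) < b := lt_of_lt_of_le one_pos hb
      calc (1 / (k * b ^ 2)) * I b ≤ (1 / (k * b ^ 2)) * (b * Real.log (1 + k * b)) := by
            apply mul_le_mul_of_nonneg_left (bound b hb).2 (by positivity)
        _ = Real.log (1 + k * b) / (k * b) := by
            field_simp
    · exact h6
  have := (tendsto_const_nhds : Tendsto (fun _ : ℝ => (1:ℝ)) atTop (nhds 1)).sub hmain
  simpa using this
end
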